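/- arXiv:1912.00671 — 2 statements merged into one kernel-verified Lean document; each statement's English description precedes it below -/
import Mathlib

section
/- Let F = G ⊕ H be a direct sum of Hilbert spaces and C a positive bounded operator on F with block structure [[C_U, C_{UV}],[C_{VU}, C_V]]. Then the pair (C, H) is compatible (i.e. there exists a bounded operator Q on F with Q² = Q, ran Q = H, and C Q = Q* C) if and only if ran C_{VU} ⊆ ran C_V. -/
noncomputable section
open scoped RealInnerProductSpace

variable (G H : Type*)
  [NormedAddCommGroup G] [InnerProductSpace ℝ G] [CompleteSpace G]
  [NormedAddCommGroup H] [InnerProductSpace ℝ H] [CompleteSpace H]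

/-- The Hilbert direct sum `F = G ⊕ H`. -/
abbrev DirSum := WithLp 2 (G × H)

/-- Embedding of `G` into `G ⊕ H`. -/
def inG : G →L[ℝ] DirSum G H :=
  ((WithLp.prodContinuousLinearEquiv 2 ℝ G H).symm :
      G × H →L[ℝ] DirSum G H).comp (ContinuousLinearMap.inl ℝ G H)

/-- Embedding of `H` into `G ⊕ H`. -/
def inH : H →L[ℝ] DirSum G H :=
  ((WithLp.prodContinuousLinearEquiv 2 ℝ G H).symm :
      G × H →L[ℝ] DirSum G H).comp (ContinuousLinearMap.inr ℝ G H)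

/-- Projection of `G ⊕ H` onto `G`. -/
def prG : DirSum G H →L[ℝ] G :=
  (ContinuousLinearMap.fst ℝ G H).comp
    ((WithLp.prodContinuousLinearEquiv 2 ℝ G H : DirSum G H →L[ℝ] G × H))

/-- Projection of `G ⊕ H` onto `H`. -/
def prH : DirSum G H →L[ℝ] H :=
  (ContinuousLinearMap.snd ℝ G H).comp
    ((WithLp.prodContinuousLinearEquiv 2 ℝ G H : DirSum G H →L[ℝ] G × H))

/-! A compatible `Q` fixes `H` and maps into it, so `prH ∘ Q† = prH`; then `X = prH Q inG`
satisfies `C_V X = C_VU`. Conversely, Douglas' lemma turns the range inclusion into a bounded `X`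
with `C_V X = C_VU`, and `Q = inH (X prG + prH)` is an idempotent onto `H` with `Q† C Q = Q† C`;
as `Q† C Q` is self-adjoint, taking adjoints gives `C Q = Q† C`. -/

open ContinuousLinearMap

section Douglas

variable {𝕜 : Type*} [RCLike 𝕜]

theorem LinearMap.continuous_of_injective_comp {E F F' : Type*}
    [NormedAddCommGroup E] [NormedSpace 𝕜 E] [CompleteSpace E]
    [NormedAddCommGroup F] [NormedSpace 𝕜 F] [CompleteSpace F]
    [NormedAddCommGroup F'] [NormedSpace 𝕜 F']
    (g : E →ₗ[𝕜] F) (T : F →L[𝕜] F') (hT : Function.Injective T) (hTg : Continuous (T ∘ g)) :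
    Continuous g := by
  refine g.continuous_of_isClosed_graph ?_
  have : (g.graph : Set (E × F)) = {p | T p.2 = T (g p.1)} := by
    ext p
    simp [LinearMap.mem_graph_iff, hT.eq_iff]
  rw [this]
  exact isClosed_eq (T.continuous.comp continuous_snd) (hTg.comp continuous_fst)

variable {E₁ E₂ E₃ : Type*}
    [NormedAddCommGroup E₁] [NormedSpace 𝕜 E₁] [CompleteSpace E₁]
    [NormedAddCommGroup E₂] [InnerProductSpace 𝕜 E₂]
    [NormedAddCommGroup E₃] [NormedSpace 𝕜 E₃]

theorem ContinuousLinearMap.injective_comp_subtypeL_orthogonal_ker (T : E₂ →L[𝕜] E₃) :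
    Function.Injective (T ∘L T.kerᗮ.subtypeL) := by
  refine (injective_iff_map_eq_zero _).2 fun y hy => ?_
  have : (y : E₂) ∈ T.ker ⊓ T.kerᗮ := ⟨hy, y.2⟩
  simpa [Submodule.inf_orthogonal_eq_bot] using this

variable [CompleteSpace E₂]

theorem ContinuousLinearMap.range_comp_subtypeL_orthogonal_ker (T : E₂ →L[𝕜] E₃) :
    Set.range (T ∘L T.kerᗮ.subtypeL) = Set.range T := by
  have : CompleteSpace T.ker := T.isClosed_ker.completeSpace_coe
  refine Set.Subset.antisymm (by rintro _ ⟨y, rfl⟩; exact ⟨y, rfl⟩) ?_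
  rintro _ ⟨z, rfl⟩
  refine ⟨⟨_, T.ker.sub_starProjection_mem_orthogonal z⟩, ?_⟩
  have hP : T (T.ker.starProjection z) = 0 := T.ker.starProjection_apply_mem z
  simp [hP]

-- Douglas' lemma: `X` is `S` followed by the inverse of `T` on `(ker T)ᗮ`, bounded by the closed
-- graph theorem.
theorem ContinuousLinearMap.exists_comp_eq_of_range_subset (T : E₂ →L[𝕜] E₃) (S : E₁ →L[𝕜] E₃)
    (h : Set.range S ⊆ Set.range T) : ∃ X : E₁ →L[𝕜] E₂, T ∘L X = S := by
  set T₀ := T ∘L T.kerᗮ.subtypeL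
  have hinj : Function.Injective T₀ := T.injective_comp_subtypeL_orthogonal_ker
  have hS : ∀ x, S x ∈ LinearMap.range (T₀ : T.kerᗮ →ₗ[𝕜] E₃) := by
    intro x
    obtain ⟨y, hy⟩ : S x ∈ Set.range T₀ := T.range_comp_subtypeL_orthogonal_ker ▸ h ⟨x, rfl⟩
    exact ⟨y, hy⟩
  let e := LinearEquiv.ofInjective (T₀ : T.kerᗮ →ₗ[𝕜] E₃) hinj
  let X₀ : E₁ →ₗ[𝕜] T.kerᗮ := e.symm.toLinearMap ∘ₗ (S : E₁ →ₗ[𝕜] E₃).codRestrict _ hS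
  have hX₀ : ∀ x, T₀ (X₀ x) = S x := fun x => congrArg Subtype.val (e.apply_symm_apply _)
  have hcont : Continuous X₀ :=
    X₀.continuous_of_injective_comp T₀ hinj (by simpa [Function.comp_def, hX₀] using S.continuous)
  exact ⟨T.kerᗮ.subtypeL ∘L ⟨X₀, hcont⟩, ContinuousLinearMap.ext hX₀⟩

end Douglas

section Splitting

variable {R M N : Type*} [Semiring R] [AddCommMonoid M] [Module R M] [TopologicalSpace M]
  [AddCommMonoid N] [Module R N] [TopologicalSpace N]

theorem ContinuousLinearMap.comp_idempotent_of_comp_eq_id {J : N →L[R] M} {W : M →L[R] N}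
    (h : W ∘L J = .id R N) : (J ∘L W) ∘L (J ∘L W) = J ∘L W := by
  rw [comp_assoc, ← comp_assoc W, h, id_comp]

theorem ContinuousLinearMap.range_comp_of_comp_eq_id {J : N →L[R] M} {W : M →L[R] N}
    (h : W ∘L J = .id R N) : Set.range (J ∘L W) = Set.range J := by
  refine Set.Subset.antisymm (by rintro _ ⟨x, rfl⟩; exact ⟨W x, rfl⟩) ?_
  rintro _ ⟨y, rfl⟩
  exact ⟨J y, by simp [← comp_apply W J, h]⟩

end Splitting

theorem ContinuousLinearMap.comp_eq_adjoint_comp_of_adjoint_conj_eq {𝕜 E : Type*} [RCLike 𝕜]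
    [NormedAddCommGroup E] [InnerProductSpace 𝕜 E] [CompleteSpace E] {C Q : E →L[𝕜] E}
    (hC : IsSelfAdjoint C) (h : adjoint Q ∘L C ∘L Q = adjoint Q ∘L C) :
    C ∘L Q = adjoint Q ∘L C :=
  calc C ∘L Q = adjoint (adjoint Q ∘L C) := by rw [adjoint_comp, adjoint_adjoint, hC.adjoint_eq]
    _ = adjoint (adjoint Q ∘L C ∘L Q) := by rw [h]
    _ = adjoint Q ∘L C ∘L Q := (hC.adjoint_conj Q).adjoint_eq
    _ = adjoint Q ∘L C := h

variable {G H}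

section Blocks

omit [CompleteSpace G] [CompleteSpace H]

@[simp] lemma prG_inH (h : H) : prG G H (inH G H h) = 0 := rfl
@[simp] lemma prH_inH (h : H) : prH G H (inH G H h) = h := rfl

lemma inG_comp_prG_add_inH_comp_prH :
    inG G H ∘L prG G H + inH G H ∘L prH G H = .id ℝ (DirSum G H) := by
  ext x
  apply (WithLp.prodContinuousLinearEquiv 2 ℝ G H).injective
  ext <;> simp [inG, inH, prG, prH]

lemma inner_inH (b : H) (y : DirSum G H) : ⟪inH G H b, y⟫ = ⟪b, prH G H y⟫ := by
  simp [WithLp.prod_inner_apply, inH, prH]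

theorem comp_inH_comp_eq_of_comp_inG_eq {E : Type*} [NormedAddCommGroup E] [NormedSpace ℝ E]
    {T : DirSum G H →L[ℝ] E} {X : G →L[ℝ] H} (hX : T ∘L inH G H ∘L X = T ∘L inG G H) :
    T ∘L inH G H ∘L (X ∘L prG G H + prH G H) = T :=
  calc _ = T ∘L (inG G H ∘L prG G H + inH G H ∘L prH G H) := by
        simp only [comp_add, ← comp_assoc] at hX ⊢
        rw [hX]
    _ = T := by rw [inG_comp_prG_add_inH_comp_prH, ContinuousLinearMap.comp_id]

end Blocks

lemma adjoint_inH : adjoint (inH G H) = prH G H := by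
  rw [(eq_adjoint_iff (inH G H) (prH G H)).2 inner_inH, adjoint_adjoint]

theorem range_prH_comp_inG_subset_of_compatible {C Q : DirSum G H →L[ℝ] DirSum G H}
    (hQQ : Q ∘L Q = Q) (hQ : Set.range Q = Set.range (inH G H))
    (hCQ : C ∘L Q = adjoint Q ∘L C) :
    Set.range (prH G H ∘L C ∘L inG G H) ⊆ Set.range (prH G H ∘L C ∘L inH G H) := by
  have hQ_inH : Q ∘L inH G H = inH G H := by
    ext1 h
    obtain ⟨x, hx⟩ : inH G H h ∈ Set.range Q := hQ ▸ ⟨h, rfl⟩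
    rw [comp_apply, ← hx, ← comp_apply Q Q, hQQ]
  have hinH_Q : inH G H ∘L prH G H ∘L Q = Q := by
    ext1 x
    obtain ⟨h, hh⟩ : Q x ∈ Set.range (inH G H) := hQ ▸ ⟨x, rfl⟩
    simp [← hh]
  have hprH_adjoint : prH G H ∘L adjoint Q = prH G H := by
    rw [← adjoint_inH, ← adjoint_comp, hQ_inH]
  have hfactor : (prH G H ∘L C ∘L inH G H) ∘L (prH G H ∘L Q ∘L inG G H)
      = prH G H ∘L C ∘L inG G H :=
    calc _ = prH G H ∘L (C ∘L Q) ∘L inG G H := by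
          conv_rhs => rw [← hinH_Q]
          simp only [comp_assoc]
      _ = prH G H ∘L C ∘L inG G H := by
          rw [hCQ, comp_assoc, ← comp_assoc _ (adjoint Q), hprH_adjoint]
  rw [← hfactor]
  rintro _ ⟨g, rfl⟩
  exact ⟨_, rfl⟩

variable (G H)

theorem statement4
    (C : DirSum G H →L[ℝ] DirSum G H)
    (hsa : IsSelfAdjoint C) :
    (∃ Q : DirSum G H →L[ℝ] DirSum G H,
        Q.comp Q = Q ∧ Set.range Q = Set.range (inH G H) ∧
        C.comp Q = (ContinuousLinearMap.adjoint Q).comp C) ↔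
      Set.range ((prH G H).comp (C.comp (inG G H)))
        ⊆ Set.range ((prH G H).comp (C.comp (inH G H))) := by
  refine ⟨fun ⟨Q, hQQ, hQ, hCQ⟩ => range_prH_comp_inG_subset_of_compatible hQQ hQ hCQ, fun hran => ?_⟩
  obtain ⟨X, hX⟩ := (prH G H ∘L C ∘L inH G H).exists_comp_eq_of_range_subset _ hran
  set W := X ∘L prG G H + prH G H
  have hW : W ∘L inH G H = .id ℝ H := by
    ext1 h
    simp [W]
  have hCW : (prH G H ∘L C) ∘L inH G H ∘L W = prH G H ∘L C :=
    comp_inH_comp_eq_of_comp_inG_eq (by simpa only [comp_assoc] using hX)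
  refine ⟨inH G H ∘L W, comp_idempotent_of_comp_eq_id hW, range_comp_of_comp_eq_id hW,
    comp_eq_adjoint_comp_of_adjoint_conj_eq hsa ?_⟩
  rw [adjoint_comp, adjoint_inH]
  simp only [comp_assoc] at hCW ⊢
  rw [hCW]
end
end

section
/- In the setting of the centred finite-rank CME approximation, for every g ∈ G and n ∈ ℕ, the equivalence class [h_g^(n)] of h_g^(n) := C_X^(n)† C_{XY}^(n) g is the orthogonal projection, in the quotient space L²_C(P_X) with inner product ⟨[f₁],[f₂]⟩ = Cov[f₁(X), f₂(X)], of [f_g] onto the finite-dimensional subspace H_C^(n) spanned by [h_1],…,[h_n]. -/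
open MeasureTheory
open scoped RealInnerProductSpace

/-!
The Douglas equation `P C_X P Q = P C_XY` says that, tested against `h ∈ H^(n)`,
`⟪h, C_X (Q g)⟫ = ⟪h, C_XY g⟫`, i.e. `Cov[h(X), (Q g)(X)] = Cov[h(X), g(Y)]`. Since `h(X)` is
`σ(X)`-measurable, conditioning on `X` does not change the right-hand side, which is therefore
`Cov[h(X), f_g(X)]`: the residual `f_g - Q g` is `Cov`-orthogonal to `H^(n)`, and `Q g` lies in
`H^(n)` because the range of `P C_X P` does.
-/

section Projection

variable {𝕜 E ι : Type*} [RCLike 𝕜] [NormedAddCommGroup E] [InnerProductSpace 𝕜 E]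

theorem Orthonormal.starProjection_span_image_finset {v : ι → E} (hv : Orthonormal 𝕜 v)
    (s : Finset ι) [(Submodule.span 𝕜 (v '' s)).HasOrthogonalProjection] (x : E) :
    (Submodule.span 𝕜 (v '' s)).starProjection x = ∑ i ∈ s, inner 𝕜 (v i) x • v i := by
  refine Submodule.eq_starProjection_of_mem_of_inner_eq_zero
    (Submodule.sum_mem _ fun i hi => Submodule.smul_mem _ _ (Submodule.subset_span ⟨i, hi, rfl⟩))
    fun w hw => ?_
  suffices Submodule.span 𝕜 (v '' s) ≤
      LinearMap.ker (innerₛₗ 𝕜 (x - ∑ i ∈ s, inner 𝕜 (v i) x • v i)) from this hw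
  rw [Submodule.span_le]
  rintro _ ⟨j, hj, rfl⟩
  simp only [SetLike.mem_coe, LinearMap.mem_ker, innerₛₗ_apply_apply, inner_sub_left,
    hv.inner_left_sum _ hj, inner_conj_symm, sub_self]

theorem Submodule.inner_eq_of_starProjection_eq {K : Submodule 𝕜 E} [K.HasOrthogonalProjection]
    {x y : E} (hxy : K.starProjection x = K.starProjection y) {u : E} (hu : u ∈ K) :
    inner 𝕜 u x = inner 𝕜 u y := by
  rw [← K.starProjection_eq_self_iff.2 hu, K.inner_starProjection_left_eq_right,
    K.inner_starProjection_left_eq_right, hxy]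

end Projection

namespace ProbabilityTheory

variable {Ω : Type*} {m m₀ : MeasurableSpace Ω} {μ : Measure Ω}

theorem covariance_congr_ae_left {F F' A : Ω → ℝ} (h : F =ᵐ[μ] F') :
    cov[F, A; μ] = cov[F', A; μ] := by
  unfold covariance
  rw [integral_congr_ae h]
  exact integral_congr_ae (h.mono fun ω hω => by simp only [hω])

theorem covariance_condExp_left [IsProbabilityMeasure μ] (hm : m ≤ m₀)
    {F A : Ω → ℝ} (hF : MemLp F 2 μ) (hA : MemLp A 2 μ) (hAm : StronglyMeasurable[m] A) :
    cov[μ[F|m], A; μ] = cov[F, A; μ] := by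
  have hpull : μ[A * F|m] =ᵐ[μ] μ[F|m] * A := by
    filter_upwards [condExp_mul_of_stronglyMeasurable_left hAm (hA.integrable_mul hF)
      (hF.integrable one_le_two)] with ω hω
    rw [hω, Pi.mul_apply, Pi.mul_apply, mul_comm]
  rw [covariance_eq_sub (hF.condExp one_le_two) hA, covariance_eq_sub hF hA,
    ← integral_congr_ae hpull, integral_condExp hm, integral_condExp hm, mul_comm A]

end ProbabilityTheory

open ProbabilityTheory (covariance covariance_eq_sub covariance_fun_sub_left covariance_comm
  covariance_congr_ae_left covariance_condExp_left)

theorem statement18_general {Ω 𝒳 𝒴 H G : Type*}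
    [MeasurableSpace Ω] [MeasurableSpace 𝒳] [MeasurableSpace 𝒴]
    [NormedAddCommGroup H] [InnerProductSpace ℝ H]
    [NormedAddCommGroup G] [InnerProductSpace ℝ G]
    (ℙ : Measure Ω) [IsProbabilityMeasure ℙ]
    (X : Ω → 𝒳) (hX : Measurable X) (Y : Ω → 𝒴)
    (φ : 𝒳 → H) (hφ : StronglyMeasurable φ) (ψ : 𝒴 → G)
    (hφ2 : MemLp (fun ω => φ (X ω)) 2 ℙ) (hψ2 : MemLp (fun ω => ψ (Y ω)) 2 ℙ)
    (CX : H →L[ℝ] H) (CXY : G →L[ℝ] H)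
    (hCX : ∀ h h' : H, ⟪h, CX h'⟫ =
      (∫ ω, ⟪h, φ (X ω)⟫ * ⟪h', φ (X ω)⟫ ∂ℙ)
        - (∫ ω, ⟪h, φ (X ω)⟫ ∂ℙ) * (∫ ω, ⟪h', φ (X ω)⟫ ∂ℙ))
    (hCXY : ∀ (h : H) (g : G), ⟪h, CXY g⟫ =
      (∫ ω, ⟪h, φ (X ω)⟫ * ⟪g, ψ (Y ω)⟫ ∂ℙ)
        - (∫ ω, ⟪h, φ (X ω)⟫ ∂ℙ) * (∫ ω, ⟪g, ψ (Y ω)⟫ ∂ℙ))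
    -- `f_g` is a version of the conditional expectation `E[g(Y) | X = ·]`
    (fg : G → 𝒳 → ℝ)
    (hfg : ∀ g : G, (fun ω => fg g (X ω)) =ᵐ[ℙ]
      ℙ[(fun ω => ⟪g, ψ (Y ω)⟫) | MeasurableSpace.comap X ‹MeasurableSpace 𝒳›])
    -- `(b i)` is an orthonormal eigenbasis of `C_X`
    (b : HilbertBasis ℕ ℝ H)
    -- `P n` is the orthogonal projection onto `span {b 0, …, b (n-1)}`
    (P : ℕ → H →L[ℝ] H)
    (hP : ∀ (n : ℕ) (x : H), P n x = ∑ i ∈ Finset.range n, ⟪b i, x⟫ • b i)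
    -- `Qn n` is the operator `C_X^(n)† C_XY^(n)`, via its Douglas characterisation
    (Qn : ℕ → G →L[ℝ] H)
    (hQn1 : ∀ n, (((P n).comp (CX.comp (P n))).comp (Qn n)) = (P n).comp CXY)
    (hQn3 : ∀ n, Set.range (Qn n) ⊆ closure (Set.range ((P n).comp (CX.comp (P n))))) :
    ∀ (n : ℕ) (g : G),
      (Qn n g ∈ Submodule.span ℝ ((fun i => b i) '' {i : ℕ | i < n})) ∧
      ∀ h ∈ Submodule.span ℝ ((fun i => b i) '' {i : ℕ | i < n}),
        (∫ ω, (fg g (X ω) - ⟪Qn n g, φ (X ω)⟫) * ⟪h, φ (X ω)⟫ ∂ℙ)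
          - (∫ ω, fg g (X ω) - ⟪Qn n g, φ (X ω)⟫ ∂ℙ) * (∫ ω, ⟪h, φ (X ω)⟫ ∂ℙ) = 0 := by
  intro n g
  rw [show {i : ℕ | i < n} = ↑(Finset.range n) from (Finset.coe_range n).symm]
  set S := Submodule.span ℝ ((fun i => b i) '' ↑(Finset.range n))
  have : FiniteDimensional ℝ S := .span_of_finite ℝ ((Finset.range n).finite_toSet.image _)
  have hPS : ⇑(P n) = S.starProjection := funext fun x => by
    rw [hP, b.orthonormal.starProjection_span_image_finset]
  have hQS : Qn n g ∈ S := by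
    refine closure_minimal ?_ S.closed_of_finiteDimensional (hQn3 n ⟨g, rfl⟩)
    rintro _ ⟨x, rfl⟩
    simp only [ContinuousLinearMap.comp_apply, hPS]
    exact S.starProjection_apply_mem _
  refine ⟨hQS, fun h hS => ?_⟩
  have hnormal : ⟪h, CX (Qn n g)⟫ = ⟪h, CXY g⟫ :=
    S.inner_eq_of_starProjection_eq (by
      simpa [hPS, S.starProjection_eq_self_iff.2 hQS] using congr($(hQn1 n) g)) hS
  set F := fun ω => ⟪g, ψ (Y ω)⟫
  set A := fun ω => ⟪h, φ (X ω)⟫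
  set q := fun ω => ⟪Qn n g, φ (X ω)⟫
  have hF : MemLp F 2 ℙ := hψ2.const_inner g
  have hA : MemLp A 2 ℙ := hφ2.const_inner h
  have hq : MemLp q 2 ℙ := hφ2.const_inner (Qn n g)
  have hfgX : MemLp (fun ω => fg g (X ω)) 2 ℙ := (hF.condExp one_le_two).ae_eq (hfg g).symm
  have hAm : StronglyMeasurable[MeasurableSpace.comap X ‹_›] A :=
    ((stronglyMeasurable_const.inner hφ).measurable.comp (comap_measurable X)).stronglyMeasurable
  calc _ = covariance (fun ω => fg g (X ω) - q ω) A ℙ := (covariance_eq_sub (hfgX.sub hq) hA).symm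
    _ = covariance A F ℙ - covariance A q ℙ := by
      rw [covariance_fun_sub_left hfgX hq hA, covariance_congr_ae_left (hfg g),
        covariance_condExp_left hX.comap_le hF hA hAm, covariance_comm F, covariance_comm q]
    _ = ⟪h, CXY g⟫ - ⟪h, CX (Qn n g)⟫ := by
      rw [hCXY, hCX, covariance_eq_sub hA hF, covariance_eq_sub hA hq]; rfl
    _ = 0 := by rw [hnormal, sub_self]

/-- In the centred finite-rank CME approximation, for every `g ∈ G` and
`n ∈ ℕ`, the class `[h_g^(n)]` of `h_g^(n) := C_X^(n)† C_XY^(n) g` is the orthogonal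
projection, in `L²_C(P_X)` with inner product `⟨[f₁],[f₂]⟩ = Cov[f₁(X), f₂(X)]`, of `[f_g]`
onto the subspace `H_C^(n)` spanned by `[b 0], …, [b (n-1)]`.  Concretely:
`h_g^(n) ∈ span{b 0, …, b (n-1)}`, and for every `h` in this span,
`Cov[f_g(X) − h_g^(n)(X), h(X)] = 0`.  Here `h_g^(n) = Qn n g` where `Qn n` is the operator
`C_X^(n)† C_XY^(n)` given by its Douglas characterisation, with
`C_X^(n) = (P n) C_X (P n)` and `C_XY^(n) = (P n) C_XY` for `P n` the orthogonal projection
onto `span{b 0, …, b (n-1)}`, `(b i)` an orthonormal eigenbasis of `C_X`. -/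
theorem statement18 {Ω 𝒳 𝒴 H G : Type*}
    [MeasurableSpace Ω] [MeasurableSpace 𝒳] [MeasurableSpace 𝒴]
    [NormedAddCommGroup H] [InnerProductSpace ℝ H] [CompleteSpace H]
    [TopologicalSpace.SeparableSpace H]
    [NormedAddCommGroup G] [InnerProductSpace ℝ G] [CompleteSpace G]
    [TopologicalSpace.SeparableSpace G]
    (ℙ : Measure Ω) [IsProbabilityMeasure ℙ]
    (X : Ω → 𝒳) (hX : Measurable X) (Y : Ω → 𝒴) (hY : Measurable Y)
    (φ : 𝒳 → H) (hφ : StronglyMeasurable φ) (ψ : 𝒴 → G) (hψ : StronglyMeasurable ψ)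
    (hφ2 : MemLp (fun ω => φ (X ω)) 2 ℙ) (hψ2 : MemLp (fun ω => ψ (Y ω)) 2 ℙ)
    (CX : H →L[ℝ] H) (CXY : G →L[ℝ] H)
    (hCX : ∀ h h' : H, ⟪h, CX h'⟫ =
      (∫ ω, ⟪h, φ (X ω)⟫ * ⟪h', φ (X ω)⟫ ∂ℙ)
        - (∫ ω, ⟪h, φ (X ω)⟫ ∂ℙ) * (∫ ω, ⟪h', φ (X ω)⟫ ∂ℙ))
    (hCXY : ∀ (h : H) (g : G), ⟪h, CXY g⟫ =
      (∫ ω, ⟪h, φ (X ω)⟫ * ⟪g, ψ (Y ω)⟫ ∂ℙ)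
        - (∫ ω, ⟪h, φ (X ω)⟫ ∂ℙ) * (∫ ω, ⟪g, ψ (Y ω)⟫ ∂ℙ))
    -- `f_g` is a version of the conditional expectation `E[g(Y) | X = ·]`
    (fg : G → 𝒳 → ℝ)
    (hfg : ∀ g : G, (fun ω => fg g (X ω)) =ᵐ[ℙ]
      ℙ[(fun ω => ⟪g, ψ (Y ω)⟫) | MeasurableSpace.comap X ‹MeasurableSpace 𝒳›])
    -- `(b i)` is an orthonormal eigenbasis of `C_X`
    (b : HilbertBasis ℕ ℝ H) (σ : ℕ → ℝ) (hσ : ∀ i, 0 ≤ σ i)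
    (heig : ∀ i, CX (b i) = σ i • b i)
    -- `P n` is the orthogonal projection onto `span {b 0, …, b (n-1)}`
    (P : ℕ → H →L[ℝ] H)
    (hP : ∀ (n : ℕ) (x : H), P n x = ∑ i ∈ Finset.range n, ⟪b i, x⟫ • b i)
    -- `Qn n` is the operator `C_X^(n)† C_XY^(n)`, via its Douglas characterisation
    (Qn : ℕ → G →L[ℝ] H)
    (hQn1 : ∀ n, (((P n).comp (CX.comp (P n))).comp (Qn n)) = (P n).comp CXY)
    (hQn2 : ∀ n, LinearMap.ker (Qn n : G →ₗ[ℝ] H) = LinearMap.ker ((P n).comp CXY : G →ₗ[ℝ] H))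
    (hQn3 : ∀ n, Set.range (Qn n) ⊆ closure (Set.range ((P n).comp (CX.comp (P n))))) :
    ∀ (n : ℕ) (g : G),
      (Qn n g ∈ Submodule.span ℝ ((fun i => b i) '' {i : ℕ | i < n})) ∧
      ∀ h ∈ Submodule.span ℝ ((fun i => b i) '' {i : ℕ | i < n}),
        (∫ ω, (fg g (X ω) - ⟪Qn n g, φ (X ω)⟫) * ⟪h, φ (X ω)⟫ ∂ℙ)
          - (∫ ω, fg g (X ω) - ⟪Qn n g, φ (X ω)⟫ ∂ℙ) * (∫ ω, ⟪h, φ (X ω)⟫ ∂ℙ) = 0 :=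
  statement18_general ℙ X hX Y φ hφ ψ hφ2 hψ2 CX CXY hCX hCXY fg hfg b P hP Qn hQn1 hQn3
end
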